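/- arXiv:2503.07220 — 9 statements merged into one kernel-verified Lean document; each statement's English description precedes it below -/
import Mathlib

section
/- Let D be a positive integer, M a subset of Euclidean space ℝ^D, p ∈ M, T a linear subspace of ℝ^D, and τ > 0. Assume that for every unit vector ν ∈ T^⊥ the open ball of radius τ centered at p + τ·ν is disjoint from M. Then for every x ∈ T and y ∈ T^⊥ such that p + x + y ∈ M, ‖x‖ ≤ τ, and ‖y‖ ≤ τ/2, one has ‖y‖ ≤ τ − √(τ² − ‖x‖²). -/
open scoped RealInnerProductSpace

/-! Split `p + x + y` into its tangential part `x` and its normal part `y = ‖y‖ ν`. The point lies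
outside the ball of radius `τ` about `p + τ ν`, and by Pythagoras its squared distance to that
centre is `‖x‖² + (τ - ‖y‖)²`; hence `τ² - ‖x‖² ≤ (τ - ‖y‖)²`. -/

theorem le_sub_sqrt_of_le_norm_add_smul {E : Type*} [NormedAddCommGroup E]
    [InnerProductSpace ℝ E] {x ν : E} {t τ : ℝ} (hxν : ⟪x, ν⟫ = 0) (hν : ‖ν‖ = 1)
    (hτ : 0 ≤ τ) (ht : t ≤ τ) (hout : τ ≤ ‖x + (t - τ) • ν‖) :
    t ≤ τ - √(τ ^ 2 - ‖x‖ ^ 2) := by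
  have hpyth : ‖x + (t - τ) • ν‖ ^ 2 = ‖x‖ ^ 2 + (τ - t) ^ 2 := by
    rw [norm_add_sq_real, inner_smul_right, hxν, norm_smul, hν, Real.norm_eq_abs, mul_one, sq_abs]
    ring
  have hsq : τ ^ 2 ≤ ‖x + (t - τ) • ν‖ ^ 2 := pow_le_pow_left₀ hτ hout 2
  have hsqrt : √(τ ^ 2 - ‖x‖ ^ 2) ≤ τ - t :=
    Real.sqrt_le_iff.mpr ⟨by linarith, by linarith⟩
  linarith

theorem stmt_0_general (D : ℕ) (M : Set (EuclideanSpace ℝ (Fin D)))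
    (p : EuclideanSpace ℝ (Fin D))
    (T : Submodule ℝ (EuclideanSpace ℝ (Fin D))) (τ : ℝ) (hτ : 0 < τ)
    (hreach : ∀ ν ∈ Tᗮ, ‖ν‖ = 1 → Disjoint (Metric.ball (p + τ • ν) τ) M) :
    ∀ x ∈ T, ∀ y ∈ Tᗮ, p + x + y ∈ M → ‖x‖ ≤ τ → ‖y‖ ≤ τ / 2 →
      ‖y‖ ≤ τ - Real.sqrt (τ ^ 2 - ‖x‖ ^ 2) := by
  intro x hx y hy hm _ hyτ
  rcases eq_or_ne y 0 with rfl | hy0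
  · have : √(τ ^ 2 - ‖x‖ ^ 2) ≤ τ :=
      Real.sqrt_le_iff.mpr ⟨hτ.le, sub_le_self _ (sq_nonneg _)⟩
    simpa using this
  set ν := (‖y‖⁻¹ : ℝ) • y
  have hyν : y = ‖y‖ • ν := (smul_inv_smul₀ (norm_ne_zero_iff.mpr hy0) y).symm
  have hνT : ν ∈ Tᗮ := T.orthogonal.smul_mem _ hy
  have hout : p + x + y ∉ Metric.ball (p + τ • ν) τ :=
    fun h ↦ Set.disjoint_left.mp (hreach ν hνT (norm_smul_inv_norm hy0)) h hm
  refine le_sub_sqrt_of_le_norm_add_smul (hνT x hx) (norm_smul_inv_norm hy0) hτ.le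
    (by linarith) ?_
  have hdiff : p + x + y - (p + τ • ν) = x + (‖y‖ - τ) • ν := by
    rw [sub_smul, ← hyν]
    abel
  rwa [Metric.mem_ball, not_lt, dist_eq_norm, hdiff] at hout

/-- **Bounding Ball lemma.** If for every unit normal direction `ν` to `T` at `p` the open
ball of radius `τ` centered at `p + τ • ν` is disjoint from `M`, then for every tangential
component `x ∈ T` and normal component `y ∈ Tᗮ` with `p + x + y ∈ M`, `‖x‖ ≤ τ` and
`‖y‖ ≤ τ/2`, we have `‖y‖ ≤ τ - √(τ² - ‖x‖²)`. -/
theorem stmt_0 (D : ℕ) (hD : 0 < D) (M : Set (EuclideanSpace ℝ (Fin D)))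
    (p : EuclideanSpace ℝ (Fin D)) (hp : p ∈ M)
    (T : Submodule ℝ (EuclideanSpace ℝ (Fin D))) (τ : ℝ) (hτ : 0 < τ)
    (hreach : ∀ ν ∈ Tᗮ, ‖ν‖ = 1 → Disjoint (Metric.ball (p + τ • ν) τ) M) :
    ∀ x ∈ T, ∀ y ∈ Tᗮ, p + x + y ∈ M → ‖x‖ ≤ τ → ‖y‖ ≤ τ / 2 →
      ‖y‖ ≤ τ - Real.sqrt (τ ^ 2 - ‖x‖ ^ 2) :=
  stmt_0_general D M p T τ hτ hreach
end

section
/- Let D be a positive integer, M ⊆ ℝ^D, p ∈ M, and let T and H be linear subspaces of ℝ^D of the same dimension d. Let τ > 0 and α ∈ [0, π/4]. Assume: (i) for every unit vector ν ∈ T^⊥ the open ball of radius τ centered at p + τ·ν is disjoint from M; (ii) for every unit vector u ∈ T, dist(u, H) ≤ sin α, and for every unit vector w ∈ H, dist(w, T) ≤ sin α. Then for every x ∈ H and y ∈ H^⊥ such that p + x + y ∈ M, ‖x‖ + τ·sin α ≤ τ, and ‖y‖ ≤ τ/2, one has ‖y‖ ≤ τ·cos α − √(τ² − (‖x‖ +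 τ·sin α)²ᐟ). -/
/-!
Split `y = w + z` along `T ⊕ Tᗮ`. Since `y ⊥ H` and `T` is tilted from `H` by at most `α`,
`‖w‖ ≤ ‖y‖ sin α`, so `ν = z / ‖z‖` is a unit normal with `⟪y, ν⟫ ≥ ‖y‖ cos α`, while
`⟪x, ν⟫ ≥ -‖x‖ sin α` because `x ∈ H`. The point `p + x + y` lies outside the ball of radius `τ`
about `p + τ ν`, i.e. `2τ ⟪x + y, ν⟫ ≤ ‖x‖² + ‖y‖²`, which rearranges to
`(τ cos α - ‖y‖)² ≥ τ² - (‖x‖ + τ sin α)²`; and `τ cos α - ‖y‖ ≥ 0` as `cos α ≥ 1/2`.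
-/

open scoped RealInnerProductSpace

section

variable {E : Type*} [NormedAddCommGroup E] [InnerProductSpace ℝ E]

theorem abs_inner_le_norm_mul_infDist {S : Submodule ℝ E} {y : E} (hy : y ∈ Sᗮ) (u : E) :
    |⟪y, u⟫| ≤ ‖y‖ * Metric.infDist u S := by
  rcases eq_or_ne y 0 with rfl | hy0
  · simp
  have hny : 0 < ‖y‖ := norm_pos_iff.mpr hy0
  rw [← div_le_iff₀' hny, Metric.le_infDist ⟨0, S.zero_mem⟩]
  intro s hs
  have hys : ⟪y, s⟫ = 0 := Submodule.inner_left_of_mem_orthogonal hs hy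
  rw [div_le_iff₀' hny, dist_eq_norm, ← sub_zero ⟪y, u⟫, ← hys, ← inner_sub_right]
  exact abs_real_inner_le_norm y (u - s)

theorem abs_inner_le_of_forall_unit_infDist_le {S K : Submodule ℝ E} {c : ℝ}
    (hKS : ∀ u ∈ K, ‖u‖ = 1 → Metric.infDist u S ≤ c) {y u : E} (hy : y ∈ Sᗮ) (hu : u ∈ K) :
    |⟪y, u⟫| ≤ ‖y‖ * ‖u‖ * c := by
  rcases eq_or_ne u 0 with rfl | hu0
  · simp
  have hnu : 0 < ‖u‖ := norm_pos_iff.mpr hu0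
  have hunit := abs_inner_le_norm_mul_infDist hy (‖u‖⁻¹ • u)
  replace hunit := hunit.trans (mul_le_mul_of_nonneg_left
    (hKS _ (K.smul_mem _ hu) (norm_smul_inv_norm hu0)) (norm_nonneg y))
  rw [real_inner_smul_right, abs_mul, abs_inv, abs_norm, inv_mul_le_iff₀ hnu] at hunit
  linarith

theorem two_mul_inner_le_norm_sq_of_notMem_ball {p q ν : E} {τ : ℝ} (hτ : 0 ≤ τ)
    (hν : ‖ν‖ = 1) (hq : q ∉ Metric.ball (p + τ • ν) τ) :
    2 * τ * ⟪q - p, ν⟫ ≤ ‖q - p‖ ^ 2 := by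
  have h : τ ≤ ‖q - p - τ • ν‖ := by
    simpa [dist_eq_norm, sub_sub] using hq
  have h2 : τ ^ 2 ≤ ‖q - p - τ • ν‖ ^ 2 := pow_le_pow_left₀ hτ h 2
  rw [norm_sub_sq_real, real_inner_smul_right, norm_smul, Real.norm_eq_abs, abs_of_nonneg hτ,
    hν] at h2
  linarith

theorem exists_unit_mem_orthogonal_norm_mul_cos_le_inner {T H : Submodule ℝ E}
    [T.HasOrthogonalProjection] {α : ℝ}
    (hTH : ∀ u ∈ T, ‖u‖ = 1 → Metric.infDist u H ≤ Real.sin α) (hcos : 0 < Real.cos α)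
    {y : E} (hy : y ∈ Hᗮ) (hy0 : y ≠ 0) :
    ∃ ν ∈ Tᗮ, ‖ν‖ = 1 ∧ ‖y‖ * Real.cos α ≤ ⟪y, ν⟫ := by
  obtain ⟨w, hw, z, hz, rfl⟩ := T.exists_add_mem_mem_orthogonal y
  have hwz : ⟪w, z⟫ = 0 := Submodule.inner_right_of_mem_orthogonal hw hz
  have hzw : ⟪z, w⟫ = 0 := Submodule.inner_left_of_mem_orthogonal hw hz
  have hpyth : ‖w + z‖ ^ 2 = ‖w‖ ^ 2 + ‖z‖ ^ 2 := by
    rw [norm_add_sq_real, hwz]; ring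
  have hw_le : ‖w‖ ^ 2 ≤ (‖w + z‖ * Real.sin α) ^ 2 := by
    have h := abs_inner_le_of_forall_unit_infDist_le hTH hy hw
    rw [inner_add_left, hzw, add_zero, real_inner_self_eq_norm_sq,
      abs_of_nonneg (sq_nonneg _)] at h
    nlinarith [sq_nonneg (‖w‖ - ‖w + z‖ * Real.sin α), norm_nonneg w]
  have hz_ge : ‖w + z‖ * Real.cos α ≤ ‖z‖ := by
    refine le_of_sq_le_sq ?_ (norm_nonneg z)
    have hsc := Real.sin_sq_add_cos_sq α
    linear_combination (‖w + z‖ ^ 2) * hsc + hpyth + hw_le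
  have hz0 : z ≠ 0 := by
    rintro rfl
    rw [add_zero] at hy0 hz_ge
    rw [norm_zero] at hz_ge
    exact hz_ge.not_gt (mul_pos (norm_pos_iff.mpr hy0) hcos)
  refine ⟨‖z‖⁻¹ • z, Tᗮ.smul_mem _ hz, norm_smul_inv_norm hz0, ?_⟩
  rw [real_inner_smul_right, inner_add_left, hwz, zero_add, real_inner_self_eq_norm_sq, sq,
    inv_mul_cancel_left₀ (norm_ne_zero_iff.mpr hz0)]
  exact hz_ge

theorem two_mul_norm_mul_cos_le_of_disjoint_ball {M : Set E} {p x y : E}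
    {T H : Submodule ℝ E} [T.HasOrthogonalProjection] {τ α : ℝ} (hτ : 0 ≤ τ)
    (hsin : 0 ≤ Real.sin α) (hcos : 0 < Real.cos α)
    (hreach : ∀ ν ∈ Tᗮ, ‖ν‖ = 1 → Disjoint (Metric.ball (p + τ • ν) τ) M)
    (hTH : ∀ u ∈ T, ‖u‖ = 1 → Metric.infDist u H ≤ Real.sin α)
    (hHT : ∀ w ∈ H, ‖w‖ = 1 → Metric.infDist w T ≤ Real.sin α)
    (hx : x ∈ H) (hy : y ∈ Hᗮ) (hq : p + x + y ∈ M) :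
    2 * τ * (‖y‖ * Real.cos α) ≤ ‖x‖ ^ 2 + ‖y‖ ^ 2 + 2 * τ * (‖x‖ * Real.sin α) := by
  rcases eq_or_ne y 0 with rfl | hy0
  · simp only [norm_zero, zero_mul, mul_zero]
    positivity
  obtain ⟨ν, hνT, hν, hyν⟩ := exists_unit_mem_orthogonal_norm_mul_cos_le_inner hTH hcos hy hy0
  have hq' : p + x + y ∉ Metric.ball (p + τ • ν) τ := fun h =>
    Set.disjoint_left.mp (hreach ν hνT hν) h hq
  have hball := two_mul_inner_le_norm_sq_of_notMem_ball hτ hν hq'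
  have hxy : ‖x + y‖ ^ 2 = ‖x‖ ^ 2 + ‖y‖ ^ 2 := by
    rw [norm_add_sq_real, Submodule.inner_right_of_mem_orthogonal hx hy]; ring
  rw [add_assoc, add_sub_cancel_left, inner_add_left, hxy] at hball
  have hxν := abs_inner_le_of_forall_unit_infDist_le hHT hνT hx
  rw [hν, one_mul, real_inner_comm] at hxν
  have hx_ge := neg_le_of_abs_le hxν
  nlinarith [mul_le_mul_of_nonneg_left hx_ge hτ, mul_le_mul_of_nonneg_left hyν hτ]

theorem le_mul_cos_sub_sqrt_of_two_mul_le {a b τ α : ℝ}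
    (hab : 2 * τ * (b * Real.cos α) ≤ a ^ 2 + b ^ 2 + 2 * τ * (a * Real.sin α))
    (hb : b ≤ τ * Real.cos α) :
    b ≤ τ * Real.cos α - Real.sqrt (τ ^ 2 - (a + τ * Real.sin α) ^ 2) := by
  rw [le_sub_comm, Real.sqrt_le_iff]
  refine ⟨sub_nonneg.mpr hb, ?_⟩
  linear_combination hab - τ ^ 2 * Real.sin_sq_add_cos_sq α

end

theorem stmt_1_general (D : ℕ) (M : Set (EuclideanSpace ℝ (Fin D)))
    (p : EuclideanSpace ℝ (Fin D))
    (T H : Submodule ℝ (EuclideanSpace ℝ (Fin D)))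
    (τ α : ℝ) (hτ : 0 < τ) (hα0 : 0 ≤ α) (hα : α ≤ Real.pi / 4)
    (hreach : ∀ ν ∈ Tᗮ, ‖ν‖ = 1 → Disjoint (Metric.ball (p + τ • ν) τ) M)
    (hTH : ∀ u ∈ T, ‖u‖ = 1 →
      Metric.infDist u (H : Set (EuclideanSpace ℝ (Fin D))) ≤ Real.sin α)
    (hHT : ∀ w ∈ H, ‖w‖ = 1 →
      Metric.infDist w (T : Set (EuclideanSpace ℝ (Fin D))) ≤ Real.sin α) :
    ∀ x ∈ H, ∀ y ∈ Hᗮ, p + x + y ∈ M → ‖x‖ + τ * Real.sin α ≤ τ → ‖y‖ ≤ τ / 2 →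
      ‖y‖ ≤ τ * Real.cos α - Real.sqrt (τ ^ 2 - (‖x‖ + τ * Real.sin α) ^ 2) := by
  intro x hx y hy hq _ hyτ
  have hsin : 0 ≤ Real.sin α :=
    Real.sin_nonneg_of_nonneg_of_le_pi hα0 (by linarith [Real.pi_pos])
  have hcos : 1 / 2 ≤ Real.cos α := by
    rw [← Real.cos_pi_div_three]
    exact Real.cos_le_cos_of_nonneg_of_le_pi hα0 (by linarith [Real.pi_pos])
      (by linarith [Real.pi_pos])
  have hkey := two_mul_norm_mul_cos_le_of_disjoint_ball hτ.le hsin (by linarith) hreach hTH hHT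
    hx hy hq
  exact le_mul_cos_sub_sqrt_of_two_mul_le hkey (by nlinarith)

/-- **Bounding Ball from a tilted plane (upper bound).** -/
theorem stmt_1 (D : ℕ) (hD : 0 < D) (M : Set (EuclideanSpace ℝ (Fin D)))
    (p : EuclideanSpace ℝ (Fin D)) (hp : p ∈ M)
    (T H : Submodule ℝ (EuclideanSpace ℝ (Fin D))) (d : ℕ)
    (hdimT : Module.finrank ℝ T = d) (hdimH : Module.finrank ℝ H = d)
    (τ α : ℝ) (hτ : 0 < τ) (hα0 : 0 ≤ α) (hα : α ≤ Real.pi / 4)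
    (hreach : ∀ ν ∈ Tᗮ, ‖ν‖ = 1 → Disjoint (Metric.ball (p + τ • ν) τ) M)
    (hTH : ∀ u ∈ T, ‖u‖ = 1 →
      Metric.infDist u (H : Set (EuclideanSpace ℝ (Fin D))) ≤ Real.sin α)
    (hHT : ∀ w ∈ H, ‖w‖ = 1 →
      Metric.infDist w (T : Set (EuclideanSpace ℝ (Fin D))) ≤ Real.sin α) :
    ∀ x ∈ H, ∀ y ∈ Hᗮ, p + x + y ∈ M → ‖x‖ + τ * Real.sin α ≤ τ → ‖y‖ ≤ τ / 2 →
      ‖y‖ ≤ τ * Real.cos α - Real.sqrt (τ ^ 2 - (‖x‖ + τ * Real.sin α) ^ 2) :=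
  stmt_1_general D M p T H τ α hτ hα0 hα hreach hTH hHT
end

section
/- Let F and G be linear subspaces of ℝ^D of the same dimension d, and let α ∈ [0, π/2]. Assume that for every unit vector u ∈ F, dist(u, G) ≤ sin α, and for every unit vector w ∈ G, dist(w, F) ≤ sin α. Then for every nonzero vector v ∈ F^⊥ there exists a nonzero vector w ∈ G^⊥ such that ⟨v, w⟩ ≥ cos α · ‖v‖ · ‖w‖ (equivalently, the angle between v and w is at most α). -/
/-!
The witness is the component `w = v - P_G v` of `v` in `Gᗮ`. As `v ⊥ F`, for a unit vector
`x ∈ G` and any `y ∈ F` we have `⟪v, x⟫ = ⟪v, x - y⟫ ≤ ‖v‖ ‖x - y‖`, so `⟪v, x⟫ ≤ sin α ‖v‖`.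
Taking `x` along `P_G v` gives `‖P_G v‖ ≤ sin α ‖v‖`, hence `‖w‖ ≥ cos α ‖v‖` by Pythagoras,
and `⟪v, w⟫ = ‖w‖²` finishes. If `w = 0`, then `v ∈ G` forces `cos α = 0`, and any nonzero
vector of `Gᗮ` works; one exists because `dim Gᗮ = dim Fᗮ > 0`.
-/

open scoped RealInnerProductSpace

open Metric Module

namespace Submodule

variable {E : Type*} [NormedAddCommGroup E] [InnerProductSpace ℝ E] {F G : Submodule ℝ E}
  {s c : ℝ} {v : E}

theorem real_inner_starProjection_self (K : Submodule ℝ E) [K.HasOrthogonalProjection] (v : E) :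
    ⟪v, K.starProjection v⟫ = ‖K.starProjection v‖ ^ 2 := by
  rw [← real_inner_self_eq_norm_sq, K.inner_starProjection_left_eq_right,
    K.starProjection_eq_self_iff.mpr (K.starProjection_apply_mem v)]

theorem real_inner_le_norm_mul_infDist (hv : v ∈ Fᗮ) (u : E) :
    ⟪v, u⟫ ≤ ‖v‖ * infDist u (F : Set E) := by
  rcases eq_or_ne v 0 with rfl | hv0
  · simp
  have hpos : 0 < ‖v‖ := norm_pos_iff.mpr hv0
  rw [← div_le_iff₀' hpos, le_infDist ⟨0, F.zero_mem⟩]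
  intro y hy
  rw [div_le_iff₀' hpos, dist_eq_norm]
  calc ⟪v, u⟫ = ⟪v, u - y⟫ := by
        rw [inner_sub_right, inner_left_of_mem_orthogonal hy hv, sub_zero]
    _ ≤ ‖v‖ * ‖u - y‖ := real_inner_le_norm _ _

theorem real_inner_le_mul_norm_mul_norm_of_infDist_le
    (hGF : ∀ w ∈ G, ‖w‖ = 1 → infDist w (F : Set E) ≤ s) (hv : v ∈ Fᗮ) {x : E} (hx : x ∈ G) :
    ⟪v, x⟫ ≤ s * ‖v‖ * ‖x‖ := by
  rcases eq_or_ne x 0 with rfl | hx0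
  · simp
  have hpos : 0 < ‖x‖ := norm_pos_iff.mpr hx0
  have hunit : ‖‖x‖⁻¹ • x‖ = 1 := by rw [norm_smul, norm_inv, norm_norm, inv_mul_cancel₀ hpos.ne']
  have h : ⟪v, ‖x‖⁻¹ • x⟫ ≤ ‖v‖ * s :=
    (real_inner_le_norm_mul_infDist hv _).trans
      (mul_le_mul_of_nonneg_left (hGF _ (G.smul_mem _ hx) hunit) (norm_nonneg v))
  rw [real_inner_smul_right, inv_mul_le_iff₀ hpos] at h
  linarith

theorem norm_starProjection_sq_le_of_infDist_le [G.HasOrthogonalProjection]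
    (hGF : ∀ w ∈ G, ‖w‖ = 1 → infDist w (F : Set E) ≤ s) (hv : v ∈ Fᗮ) :
    ‖G.starProjection v‖ ^ 2 ≤ s ^ 2 * ‖v‖ ^ 2 := by
  set g := G.starProjection v
  rcases eq_or_ne g 0 with hg | hg
  · rw [hg, norm_zero, zero_pow two_ne_zero]; positivity
  have h := real_inner_le_mul_norm_mul_norm_of_infDist_le hGF hv (G.starProjection_apply_mem v)
  rw [real_inner_starProjection_self, sq, mul_le_mul_iff_left₀ (norm_pos_iff.mpr hg)] at h
  simpa [mul_pow] using pow_le_pow_left₀ (norm_nonneg g) h 2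

theorem one_sub_sq_mul_norm_sq_le_of_infDist_le [G.HasOrthogonalProjection]
    (hGF : ∀ w ∈ G, ‖w‖ = 1 → infDist w (F : Set E) ≤ s) (hv : v ∈ Fᗮ) :
    (1 - s ^ 2) * ‖v‖ ^ 2 ≤ ‖Gᗮ.starProjection v‖ ^ 2 := by
  linarith [norm_starProjection_sq_le_of_infDist_le hGF hv,
    norm_sq_eq_add_norm_sq_starProjection v G]

theorem mul_norm_mul_norm_le_real_inner_starProjection (K : Submodule ℝ E)
    [K.HasOrthogonalProjection] (h : c ^ 2 * ‖v‖ ^ 2 ≤ ‖K.starProjection v‖ ^ 2) :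
    c * ‖v‖ * ‖K.starProjection v‖ ≤ ⟪v, K.starProjection v⟫ := by
  have hc : |c| * ‖v‖ ≤ ‖K.starProjection v‖ := by
    rw [← abs_norm v, ← abs_mul, ← abs_norm (K.starProjection v)]
    exact sq_le_sq.mp (by rwa [mul_pow])
  rw [real_inner_starProjection_self, sq]
  gcongr
  exact (mul_le_mul_of_nonneg_right (le_abs_self c) (norm_nonneg v)).trans hc

theorem orthogonal_ne_bot_of_finrank_eq [FiniteDimensional ℝ E]
    (h : finrank ℝ F = finrank ℝ G) (hF : Fᗮ ≠ ⊥) : Gᗮ ≠ ⊥ := by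
  rw [Ne, orthogonal_eq_bot_iff] at hF ⊢
  rintro rfl
  exact hF (eq_top_of_finrank_eq (h.trans (finrank_top ℝ E)))

end Submodule

open Submodule

theorem stmt_3_general (D : ℕ) (F G : Submodule ℝ (EuclideanSpace ℝ (Fin D))) (d : ℕ)
    (hdimF : Module.finrank ℝ F = d) (hdimG : Module.finrank ℝ G = d)
    (α : ℝ)
    (hGF : ∀ w ∈ G, ‖w‖ = 1 →
      Metric.infDist w (F : Set (EuclideanSpace ℝ (Fin D))) ≤ Real.sin α) :
    ∀ v ∈ Fᗮ, v ≠ 0 → ∃ w ∈ Gᗮ, w ≠ 0 ∧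
      Real.cos α * ‖v‖ * ‖w‖ ≤ ⟪v, w⟫ := by
  intro v hv hv0
  have hcos : Real.cos α ^ 2 * ‖v‖ ^ 2 ≤ ‖Gᗮ.starProjection v‖ ^ 2 := by
    rw [Real.cos_sq']
    exact one_sub_sq_mul_norm_sq_le_of_infDist_le hGF hv
  by_cases hw : Gᗮ.starProjection v = 0
  · have hvG : v ∈ G := by rwa [starProjection_apply_eq_zero_iff, orthogonal_orthogonal] at hw
    have hcos0 : Real.cos α = 0 := by
      rw [hw, norm_zero, zero_pow two_ne_zero] at hcos
      have hv2 : 0 < ‖v‖ ^ 2 := by positivity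
      exact (sq_nonpos_iff _).mp (nonpos_of_mul_nonpos_left hcos hv2)
    have hGbot : Gᗮ ≠ ⊥ := orthogonal_ne_bot_of_finrank_eq (hdimF.trans hdimG.symm)
      ((Submodule.ne_bot_iff _).mpr ⟨v, hv, hv0⟩)
    obtain ⟨w, hwG, hw0⟩ := exists_mem_ne_zero_of_ne_bot hGbot
    exact ⟨w, hwG, hw0, by rw [hcos0, inner_right_of_mem_orthogonal hvG hwG]; simp⟩
  · exact ⟨_, starProjection_apply_mem _ v, hw,
      mul_norm_mul_norm_le_real_inner_starProjection _ hcos⟩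

/-- If the maximal principal angle between `F` and `G` (subspaces of the same dimension)
is at most `α`, then every nonzero `v ∈ Fᗮ` makes an angle at most `α` with some nonzero
`w ∈ Gᗮ`. -/
theorem stmt_3 (D : ℕ) (F G : Submodule ℝ (EuclideanSpace ℝ (Fin D))) (d : ℕ)
    (hdimF : Module.finrank ℝ F = d) (hdimG : Module.finrank ℝ G = d)
    (α : ℝ) (hα0 : 0 ≤ α) (hα : α ≤ Real.pi / 2)
    (hFG : ∀ u ∈ F, ‖u‖ = 1 →
      Metric.infDist u (G : Set (EuclideanSpace ℝ (Fin D))) ≤ Real.sin α)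
    (hGF : ∀ w ∈ G, ‖w‖ = 1 →
      Metric.infDist w (F : Set (EuclideanSpace ℝ (Fin D))) ≤ Real.sin α) :
    ∀ v ∈ Fᗮ, v ≠ 0 → ∃ w ∈ Gᗮ, w ≠ 0 ∧
      Real.cos α * ‖v‖ * ‖w‖ ≤ ⟪v, w⟫ :=
  stmt_3_general D F G d hdimF hdimG α hGF
end

section
/- Let F and G be linear subspaces of ℝ^D of the same dimension d, and let α ∈ [0, π/2]. Assume that for every unit vector u ∈ F, dist(u, G) ≤ sin α, and for every unit vector w ∈ G, dist(w, F) ≤ sin α. Then for every v ∈ F^⊥ and every w ∈ G, |⟨v, w⟩| ≤ sin α · ‖v‖ · ‖w‖ (equivalently, the angle between v and w is at least π/2 − α). -/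
/-!
For `v ∈ Fᗮ` and any `f ∈ F` we have `⟪v, w⟫ = ⟪v, w - f⟫`, so Cauchy–Schwarz gives
`|⟪v, w⟫| ≤ ‖v‖ · dist(w, F)`, and by homogeneity `dist(w, F) ≤ sin α · ‖w‖` for `w ∈ G`.
-/

open scoped RealInnerProductSpace Pointwise
open Metric

theorem Submodule.smul_coe_eq_self {𝕜 E : Type*} [DivisionRing 𝕜] [AddCommGroup E] [Module 𝕜 E]
    (K : Submodule 𝕜 E) {c : 𝕜} (hc : c ≠ 0) : c • (K : Set E) = K := by
  ext x
  rw [Set.mem_smul_set_iff_inv_smul_mem₀ hc, SetLike.mem_coe, SetLike.mem_coe,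
    K.smul_mem_iff (inv_ne_zero hc)]

theorem Submodule.infDist_smul {𝕜 E : Type*} [NormedDivisionRing 𝕜] [SeminormedAddCommGroup E]
    [Module 𝕜 E] [NormSMulClass 𝕜 E] (K : Submodule 𝕜 E) (c : 𝕜) (x : E) :
    infDist (c • x) K = ‖c‖ * infDist x K := by
  rcases eq_or_ne c 0 with rfl | hc
  · simp [infDist_zero_of_mem K.zero_mem]
  · rw [← infDist_smul₀ hc, K.smul_coe_eq_self hc]

theorem infDist_le_mul_norm_of_forall_norm_eq_one {E : Type*} [NormedAddCommGroup E]
    [NormedSpace ℝ E] {K L : Submodule ℝ E} {s : ℝ}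
    (h : ∀ u ∈ K, ‖u‖ = 1 → infDist u (L : Set E) ≤ s) {w : E} (hw : w ∈ K) :
    infDist w (L : Set E) ≤ s * ‖w‖ := by
  rcases eq_or_ne w 0 with rfl | hw0
  · simp [infDist_zero_of_mem L.zero_mem]
  have hw_norm : 0 < ‖w‖ := norm_pos_iff.mpr hw0
  calc infDist w L = infDist (‖w‖ • (‖w‖⁻¹ • w)) L := by rw [smul_inv_smul₀ hw_norm.ne']
    _ = ‖w‖ * infDist (‖w‖⁻¹ • w) L := by rw [L.infDist_smul, Real.norm_of_nonneg hw_norm.le]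
    _ ≤ ‖w‖ * s := by
      gcongr
      exact h _ (K.smul_mem _ hw) (norm_smul_inv_norm hw0)
    _ = s * ‖w‖ := mul_comm _ _

theorem Submodule.abs_inner_le_norm_mul_infDist {E : Type*} [NormedAddCommGroup E]
    [InnerProductSpace ℝ E] {K : Submodule ℝ E} {v : E} (hv : v ∈ Kᗮ) (w : E) :
    |⟪v, w⟫| ≤ ‖v‖ * infDist w K := by
  rcases eq_or_ne v 0 with rfl | hv0
  · simp
  have hv_norm : 0 < ‖v‖ := norm_pos_iff.mpr hv0
  rw [← div_le_iff₀' hv_norm, le_infDist ⟨0, K.zero_mem⟩]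
  intro k hk
  rw [div_le_iff₀' hv_norm, dist_eq_norm]
  calc |⟪v, w⟫| = |⟪v, w - k⟫| := by
        rw [inner_sub_right, Submodule.inner_left_of_mem_orthogonal hk hv, sub_zero]
    _ ≤ ‖v‖ * ‖w - k‖ := abs_real_inner_le_norm v (w - k)

theorem stmt_4_general (D : ℕ) (F G : Submodule ℝ (EuclideanSpace ℝ (Fin D)))
    (α : ℝ)
    (hGF : ∀ w ∈ G, ‖w‖ = 1 →
      Metric.infDist w (F : Set (EuclideanSpace ℝ (Fin D))) ≤ Real.sin α) :
    ∀ v ∈ Fᗮ, ∀ w ∈ G, |⟪v, w⟫| ≤ Real.sin α * ‖v‖ * ‖w‖ := by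
  intro v hv w hw
  calc |⟪v, w⟫| ≤ ‖v‖ * infDist w F := Submodule.abs_inner_le_norm_mul_infDist hv w
    _ ≤ ‖v‖ * (Real.sin α * ‖w‖) := by
      gcongr
      exact infDist_le_mul_norm_of_forall_norm_eq_one hGF hw
    _ = Real.sin α * ‖v‖ * ‖w‖ := by ring

/-- If the maximal principal angle between `F` and `G` (subspaces of the same dimension)
is at most `α`, then every `v ∈ Fᗮ` and `w ∈ G` satisfy `|⟨v,w⟩| ≤ sin α ‖v‖ ‖w‖`,
i.e. the angle between them is at least `π/2 − α`. -/
theorem stmt_4 (D : ℕ) (F G : Submodule ℝ (EuclideanSpace ℝ (Fin D))) (d : ℕ)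
    (hdimF : Module.finrank ℝ F = d) (hdimG : Module.finrank ℝ G = d)
    (α : ℝ) (hα0 : 0 ≤ α) (hα : α ≤ Real.pi / 2)
    (hFG : ∀ u ∈ F, ‖u‖ = 1 →
      Metric.infDist u (G : Set (EuclideanSpace ℝ (Fin D))) ≤ Real.sin α)
    (hGF : ∀ w ∈ G, ‖w‖ = 1 →
      Metric.infDist w (F : Set (EuclideanSpace ℝ (Fin D))) ≤ Real.sin α) :
    ∀ v ∈ Fᗮ, ∀ w ∈ G, |⟪v, w⟫| ≤ Real.sin α * ‖v‖ * ‖w‖ :=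
  stmt_4_general D F G α hGF
end

section
/- Let d and m be positive integers, let L₁, L₂ : ℝ^d → ℝ^m be linear maps, and let α, β ∈ [0, π/2]. Assume ‖L₁‖_op ≤ sin α, and assume that for every x ∈ ℝ^d with ‖x‖ = 1 there exists y ∈ ℝ^d such that ‖(x, L₂ x) − (y, L₁ y)‖ ≤ sin β, where the norm is the Euclidean product norm on ℝ^d × ℝ^m. Then ‖L₁ − L₂‖_op ≤ sin β · (1 + sin α). -/
namespace ContinuousLinearMap

variable {E F : Type*} [SeminormedAddCommGroup E] [NormedSpace ℝ E]
  [SeminormedAddCommGroup F] [NormedSpace ℝ F]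

theorem norm_sub_apply_le_opNorm_mul_add (L₁ L₂ : E →L[ℝ] F) (x y : E) :
    ‖(L₁ - L₂) x‖ ≤ ‖L₁‖ * ‖x - y‖ + ‖L₂ x - L₁ y‖ :=
  calc ‖(L₁ - L₂) x‖ = ‖L₁ (x - y) - (L₂ x - L₁ y)‖ := by
        rw [sub_apply, map_sub, sub_sub_sub_cancel_right]
    _ ≤ ‖L₁ (x - y)‖ + ‖L₂ x - L₁ y‖ := norm_sub_le _ _
    _ ≤ ‖L₁‖ * ‖x - y‖ + ‖L₂ x - L₁ y‖ := by gcongr; exact L₁.le_opNorm _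

theorem norm_sub_le_of_graph_near {L₁ L₂ : E →L[ℝ] F} {a s : ℝ} (hs : 0 ≤ s) (hL₁ : ‖L₁‖ ≤ a)
    (hnear : ∀ x : E, ‖x‖ = 1 → ∃ y, ‖x - y‖ ≤ s ∧ ‖L₂ x - L₁ y‖ ≤ s) :
    ‖L₁ - L₂‖ ≤ s * (1 + a) := by
  have ha : 0 ≤ a := (norm_nonneg _).trans hL₁
  refine opNorm_le_of_unit_norm (by positivity) fun x hx ↦ ?_
  obtain ⟨y, hxy, hLxy⟩ := hnear x hx
  calc ‖(L₁ - L₂) x‖ ≤ ‖L₁‖ * ‖x - y‖ + ‖L₂ x - L₁ y‖ :=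
        norm_sub_apply_le_opNorm_mul_add L₁ L₂ x y
    _ ≤ a * s + s := by gcongr
    _ = s * (1 + a) := by ring

end ContinuousLinearMap

theorem stmt_7_general (d m : ℕ)
    (L₁ L₂ : EuclideanSpace ℝ (Fin d) →L[ℝ] EuclideanSpace ℝ (Fin m))
    (α β : ℝ) (hβ0 : 0 ≤ β) (hβ : β ≤ Real.pi / 2)
    (hL1 : ‖L₁‖ ≤ Real.sin α)
    (hpair : ∀ x : EuclideanSpace ℝ (Fin d), ‖x‖ = 1 →
      ∃ y : EuclideanSpace ℝ (Fin d),
        Real.sqrt (‖x - y‖ ^ 2 + ‖L₂ x - L₁ y‖ ^ 2) ≤ Real.sin β) :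
    ‖L₁ - L₂‖ ≤ Real.sin β * (1 + Real.sin α) := by
  have hsinβ : 0 ≤ Real.sin β :=
    Real.sin_nonneg_of_nonneg_of_le_pi hβ0 (hβ.trans (by linarith [Real.pi_pos]))
  refine ContinuousLinearMap.norm_sub_le_of_graph_near hsinβ hL1 fun x hx ↦ ?_
  obtain ⟨y, hy⟩ := hpair x hx
  refine ⟨y, le_trans ?_ hy, le_trans ?_ hy⟩
  · exact Real.le_sqrt_of_sq_le (le_add_of_nonneg_right (sq_nonneg _))
  · exact Real.le_sqrt_of_sq_le (le_add_of_nonneg_left (sq_nonneg _))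

/-- Paper's lemma `norm_from_angle`: if `‖L₁‖_op ≤ sin α` and every unit `x` admits `y`
with `‖(x, L₂ x) − (y, L₁ y)‖ ≤ sin β` in the Euclidean product norm, then
`‖L₁ − L₂‖_op ≤ sin β (1 + sin α)`. -/
theorem stmt_7 (d m : ℕ) (hd : 0 < d) (hm : 0 < m)
    (L₁ L₂ : EuclideanSpace ℝ (Fin d) →L[ℝ] EuclideanSpace ℝ (Fin m))
    (α β : ℝ) (hα0 : 0 ≤ α) (hα : α ≤ Real.pi / 2) (hβ0 : 0 ≤ β) (hβ : β ≤ Real.pi / 2)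
    (hL1 : ‖L₁‖ ≤ Real.sin α)
    (hpair : ∀ x : EuclideanSpace ℝ (Fin d), ‖x‖ = 1 →
      ∃ y : EuclideanSpace ℝ (Fin d),
        Real.sqrt (‖x - y‖ ^ 2 + ‖L₂ x - L₁ y‖ ^ 2) ≤ Real.sin β) :
    ‖L₁ - L₂‖ ≤ Real.sin β * (1 + Real.sin α) :=
  stmt_7_general d m L₁ L₂ α β hβ0 hβ hL1 hpair
end

section
/- Let d ≥ 1 be an integer, R > 0, Ω a Borel subset of the closed ball of radius R centered at 0 in ℝ^d, and 0 < μ_min ≤ μ_max. Let ν be a probability measure on ℝ^d having density f with respect to Lebesgue measure with f = 0 outside Ω and μ_min ≤ f(x) ≤ μ_max for almost every x ∈ Ω. Then for every ε > 0, δ ∈ (0,1), and ρ > 0, there exists N such that for all n > N the following holds: if X₁, …, Xₙ are i.i.d. samples from ν (i.e., the sample is distributed according to the n-fold product measure ν^⊗n), then with probability at least 1 − δ, simultaneously for every x₀ ∈ ℝ^d with the open ball B(x₀, ρ) contained in Ω, the number of indices i with X_i ∈ B(x₀, ρ) is strictly greater than n·((1/2)·μ_min·V_d·ρ^d − ε)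 and strictly less than n·(2·μ_max·V_d·ρ^d + ε). -/
/-!
For a fixed measurable set `A`, the number of samples in `A` is a sum of `n` independent
indicators of variance at most `1/4`, so by Chebyshev it deviates from `n ν(A)` by `n ε / 2` with
probability `O(1 / (n ε²))`. Only finitely many sets need to be controlled: fix a finite `τ`-net `T`
of `closedBall 0 R`; every `ball x₀ ρ` lies between `ball y (ρ - τ)` and `ball y (ρ + τ)` for some
`y ∈ T`, and for `τ` small the density bounds give `ν(ball y (ρ - τ)) ≥ μ_min V_d ρ^d / 2` (when
`ball x₀ ρ ⊆ Ω`) and `ν(ball y (ρ + τ)) ≤ 2 μ_max V_d ρ^d`. A union bound over the `2 |T|` balls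
finishes the proof.
-/

open MeasureTheory ProbabilityTheory Finset Filter Topology Metric
open scoped Classical

noncomputable def sampleCount {α : Type*} {n : ℕ} (A : Set α) (X : Fin n → α) : ℕ := #{i | X i ∈ A}

section Sampling

variable {α : Type*}

lemma sampleCount_mono {n : ℕ} {A B : Set α} (h : A ⊆ B) (X : Fin n → α) :
    sampleCount A X ≤ sampleCount B X :=
  card_le_card (monotone_filter_right _ fun i _ => @h (X i))

lemma sampleCount_eq_sum_indicator {n : ℕ} (A : Set α) (X : Fin n → α) :
    (sampleCount A X : ℝ) = ∑ i, A.indicator 1 (X i) := by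
  rw [sampleCount, card_filter]
  push_cast
  simp [Set.indicator_apply]

variable [MeasurableSpace α]

lemma measure_le_abs_sampleCount_sub_le (ν : Measure α) [IsProbabilityMeasure ν] {A : Set α}
    (hA : MeasurableSet A) (n : ℕ) {c : ℝ} (hc : 0 < c) :
    Measure.pi (fun _ : Fin n => ν) {X | c ≤ |(sampleCount A X : ℝ) - n * ν.real A|}
      ≤ ENNReal.ofReal (n / (4 * c ^ 2)) := by
  set π := Measure.pi fun _ : Fin n => ν
  set g : α → ℝ := A.indicator 1
  have hg : Measurable g := measurable_one.indicator hA
  have hg01 : ∀ᵐ x ∂ν, g x ∈ Set.Icc (0 : ℝ) 1 :=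
    ae_of_all _ fun x => by by_cases hx : x ∈ A <;> simp [g, hx]
  have hgLp : MemLp g 2 ν := memLp_of_bounded hg01 hg.aestronglyMeasurable 2
  set F : (Fin n → α) → ℝ := ∑ i, fun X => g (X i)
  have hFLp : MemLp F 2 π :=
    memLp_finsetSum' _ fun i _ => hgLp.comp_measurePreserving (measurePreserving_eval _ i)
  have hcount : ∀ X, (sampleCount A X : ℝ) = F X := fun X => by
    simp [F, g, sampleCount_eq_sum_indicator]
  have hmean : π[F] = n * ν.real A := by
    have hterm : ∀ i, ∫ X, g (X i) ∂π = ν.real A := fun i => by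
      rw [integral_comp_eval (μ := fun _ => ν) hg.aestronglyMeasurable, integral_indicator_one hA]
    simp only [F, Finset.sum_apply]
    rw [integral_finsetSum _ fun i _ => integrable_comp_eval (hgLp.integrable one_le_two),
      sum_congr rfl fun i _ => hterm i]
    simp
  have hvar : Var[F; π] ≤ n / 4 := by
    rw [variance_sum_pi fun _ => hgLp]
    calc ∑ _i : Fin n, Var[g; ν] ≤ ∑ _i : Fin n, ((1 - 0) / 2 : ℝ) ^ 2 :=
          sum_le_sum fun _ _ => variance_le_sq_of_bounded hg01 hg.aemeasurable
      _ = n / 4 := by simp; ring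
  calc π {X | c ≤ |(sampleCount A X : ℝ) - n * ν.real A|} = π {X | c ≤ |F X - π[F]|} := by
        simp_rw [hcount, hmean]
    _ ≤ ENNReal.ofReal (Var[F; π] / c ^ 2) := meas_ge_le_variance_div_sq hFLp hc
    _ ≤ ENNReal.ofReal (n / 4 / c ^ 2) := by gcongr
    _ = ENNReal.ofReal (n / (4 * c ^ 2)) := by rw [div_div]

lemma ofReal_one_sub_le_measure_forall_abs_sampleCount_sub_lt (ν : Measure α)
    [IsProbabilityMeasure ν] {ι : Type*} (s : Finset ι) {A : ι → Set α}
    (hA : ∀ j ∈ s, MeasurableSet (A j)) (n : ℕ) {c : ℝ} (hc : 0 < c) :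
    ENNReal.ofReal (1 - #s * n / (4 * c ^ 2)) ≤ Measure.pi (fun _ : Fin n => ν)
      {X | ∀ j ∈ s, |(sampleCount (A j) X : ℝ) - n * ν.real (A j)| < c} := by
  set π := Measure.pi fun _ : Fin n => ν
  set good := {X : Fin n → α | ∀ j ∈ s, |(sampleCount (A j) X : ℝ) - n * ν.real (A j)| < c}
  set bad := ⋃ j ∈ s, {X : Fin n → α | c ≤ |(sampleCount (A j) X : ℝ) - n * ν.real (A j)|}
  have hbad : π bad ≤ ENNReal.ofReal (#s * n / (4 * c ^ 2)) :=
    calc π bad ≤ ∑ j ∈ s, π {X | c ≤ |(sampleCount (A j) X : ℝ) - n * ν.real (A j)|} :=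
          measure_biUnion_finset_le _ _
      _ ≤ ∑ _j ∈ s, ENNReal.ofReal (n / (4 * c ^ 2)) :=
          sum_le_sum fun j hj => measure_le_abs_sampleCount_sub_le ν (hA j hj) n hc
      _ = ENNReal.ofReal (#s * n / (4 * c ^ 2)) := by
          rw [sum_const, nsmul_eq_mul, ← ENNReal.ofReal_natCast,
            ← ENNReal.ofReal_mul (by positivity), mul_div_assoc]
  have hcover : Set.univ ⊆ good ∪ bad := fun X _ => by
    by_cases h : X ∈ good
    · exact Or.inl h
    · simp only [good, Set.mem_ofPred_eq] at h
      push Not at h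
      exact Or.inr (by simpa [bad] using h)
  rw [ENNReal.ofReal_sub _ (by positivity), ENNReal.ofReal_one, tsub_le_iff_right]
  calc 1 = π Set.univ := measure_univ.symm
    _ ≤ π good + π bad := (measure_mono hcover).trans (measure_union_le _ _)
    _ ≤ π good + ENNReal.ofReal (#s * n / (4 * c ^ 2)) := by gcongr

lemma exists_ofReal_one_sub_le_measure_forall_abs_sampleCount_sub_lt (ν : Measure α)
    [IsProbabilityMeasure ν] {ι : Type*} (s : Finset ι) {A : ι → Set α}
    (hA : ∀ j ∈ s, MeasurableSet (A j)) {t δ : ℝ} (ht : 0 < t) (hδ : 0 < δ) :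
    ∃ N : ℕ, ∀ n > N, ENNReal.ofReal (1 - δ) ≤ Measure.pi (fun _ : Fin n => ν)
      {X | ∀ j ∈ s, |(sampleCount (A j) X : ℝ) - n * ν.real (A j)| < n * t} := by
  refine ⟨⌈#s / (4 * δ * t ^ 2)⌉₊, fun n hn => ?_⟩
  have hn0 : (0 : ℝ) < n := by exact_mod_cast (Nat.zero_le _).trans_lt hn
  refine le_trans ?_ (ofReal_one_sub_le_measure_forall_abs_sampleCount_sub_lt ν s hA n
    (mul_pos hn0 ht))
  have hsn := Nat.lt_of_ceil_lt hn
  rw [div_lt_iff₀ (by positivity)] at hsn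
  gcongr
  rw [div_le_iff₀ (by positivity)]
  nlinarith [mul_lt_mul_of_pos_left hsn hn0]

lemma withDensity_ofReal_apply_le {μ : Measure α} {f : α → ℝ} {M : ℝ}
    (hf : ∀ᵐ x ∂μ, f x ≤ M) {A : Set α} (hA : MeasurableSet A) :
    μ.withDensity (fun x => ENNReal.ofReal (f x)) A ≤ ENNReal.ofReal M * μ A := by
  rw [withDensity_apply _ hA, ← setLIntegral_const]
  exact setLIntegral_mono_ae' hA (hf.mono fun x hx _ => ENNReal.ofReal_le_ofReal hx)

lemma ofReal_mul_le_withDensity_ofReal_apply {μ : Measure α} {f : α → ℝ} {m : ℝ} {A : Set α}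
    (hA : MeasurableSet A) (hf : ∀ᵐ x ∂μ, x ∈ A → m ≤ f x) :
    ENNReal.ofReal m * μ A ≤ μ.withDensity (fun x => ENNReal.ofReal (f x)) A := by
  rw [withDensity_apply _ hA, ← setLIntegral_const]
  exact setLIntegral_mono_ae' hA (hf.mono fun x hx hxA => ENNReal.ofReal_le_ofReal (hx hxA))

end Sampling

noncomputable def unitBallVolume (d : ℕ) : ℝ :=
  Real.pi ^ ((d : ℝ) / 2) / Real.Gamma ((d : ℝ) / 2 + 1)

lemma unitBallVolume_pos (d : ℕ) : 0 < unitBallVolume d :=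
  div_pos (Real.rpow_pos_of_pos Real.pi_pos _) (Real.Gamma_pos_of_pos (by positivity))

lemma EuclideanSpace.volume_ball_fin {d : ℕ} (hd : 1 ≤ d) (x : EuclideanSpace ℝ (Fin d))
    {r : ℝ} (hr : 0 ≤ r) :
    volume (ball x r) = ENNReal.ofReal (unitBallVolume d * r ^ d) := by
  have : Nonempty (Fin d) := ⟨⟨0, hd⟩⟩
  rw [EuclideanSpace.volume_ball, Fintype.card_fin, ← ENNReal.ofReal_pow hr,
    ← ENNReal.ofReal_mul (by positivity), mul_comm, unitBallVolume, Real.sqrt_eq_rpow,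
    ← Real.rpow_natCast, ← Real.rpow_mul Real.pi_pos.le]
  ring_nf

section Density

variable {d : ℕ} (hd : 1 ≤ d) {f : EuclideanSpace ℝ (Fin d) → ℝ}
  {ν : Measure (EuclideanSpace ℝ (Fin d))}
  (hν : ν = volume.withDensity fun x => ENNReal.ofReal (f x))
include hd hν

lemma measureReal_ball_le_of_density_le {M : ℝ} (hM : 0 ≤ M) (hf : ∀ᵐ x, f x ≤ M)
    (x : EuclideanSpace ℝ (Fin d)) {r : ℝ} (hr : 0 ≤ r) :
    ν.real (ball x r) ≤ M * unitBallVolume d * r ^ d := by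
  refine ENNReal.toReal_le_of_le_ofReal (by have := unitBallVolume_pos d; positivity) ?_
  rw [hν, mul_assoc, ENNReal.ofReal_mul hM, ← EuclideanSpace.volume_ball_fin hd x hr]
  exact withDensity_ofReal_apply_le hf measurableSet_ball

lemma le_measureReal_ball_of_le_density [IsFiniteMeasure ν] {m : ℝ} (hm : 0 ≤ m)
    {x : EuclideanSpace ℝ (Fin d)} {r : ℝ} (hr : 0 ≤ r)
    (hf : ∀ᵐ y, y ∈ ball x r → m ≤ f y) :
    m * unitBallVolume d * r ^ d ≤ ν.real (ball x r) := by
  refine (ENNReal.ofReal_le_iff_le_toReal (measure_ne_top ν _)).mp ?_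
  rw [mul_assoc, ENNReal.ofReal_mul hm, ← EuclideanSpace.volume_ball_fin hd x hr, hν]
  exact ofReal_mul_le_withDensity_ofReal_apply measurableSet_ball hf

lemma sampleCount_ball_mem_Ioo_of_dist_lt [IsFiniteMeasure ν]
    {Ω : Set (EuclideanSpace ℝ (Fin d))} {m M : ℝ} (hm : 0 ≤ m) (hM : 0 ≤ M)
    (hfm : ∀ᵐ x, x ∈ Ω → m ≤ f x) (hfM : ∀ᵐ x, f x ≤ M)
    {n : ℕ} (X : Fin n → EuclideanSpace ℝ (Fin d)) {x y : EuclideanSpace ℝ (Fin d)} {ρ τ c : ℝ}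
    (hτρ : τ ≤ ρ) (hxy : dist x y < τ) (hxΩ : ball x ρ ⊆ Ω)
    (hsub : |(sampleCount (ball y (ρ - τ)) X : ℝ) - n * ν.real (ball y (ρ - τ))| < c)
    (hadd : |(sampleCount (ball y (ρ + τ)) X : ℝ) - n * ν.real (ball y (ρ + τ))| < c) :
    n * (m * unitBallVolume d * (ρ - τ) ^ d) - c < sampleCount (ball x ρ) X ∧
      (sampleCount (ball x ρ) X : ℝ) < n * (M * unitBallVolume d * (ρ + τ) ^ d) + c := by
  have hτ : 0 ≤ τ := dist_nonneg.trans hxy.le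
  have hinner : ball y (ρ - τ) ⊆ ball x ρ :=
    ball_subset_ball' (by rw [dist_comm]; linarith)
  have houter : ball x ρ ⊆ ball y (ρ + τ) := ball_subset_ball' (by linarith)
  have hνinner := le_measureReal_ball_of_le_density hd hν hm (sub_nonneg.2 hτρ)
    (hfm.mono fun z hz hzb => hz (hxΩ (hinner hzb)))
  have hνouter := measureReal_ball_le_of_density_le hd hν hM hfM y (by linarith : 0 ≤ ρ + τ)
  have hcount_inner : (sampleCount (ball y (ρ - τ)) X : ℝ)
      ≤ sampleCount (ball x ρ) X := mod_cast sampleCount_mono hinner X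
  have hcount_outer : (sampleCount (ball x ρ) X : ℝ)
      ≤ sampleCount (ball y (ρ + τ)) X := mod_cast sampleCount_mono houter X
  have hn : (0 : ℝ) ≤ n := n.cast_nonneg
  constructor
  · nlinarith [(abs_lt.mp hsub).1, mul_le_mul_of_nonneg_left hνinner hn]
  · nlinarith [(abs_lt.mp hadd).2, mul_le_mul_of_nonneg_left hνouter hn]

end Density

lemma exists_pos_lt_pow_add_le_two_mul_and_half_le_pow_sub {ρ : ℝ} (hρ : 0 < ρ) (d : ℕ) :
    ∃ τ > 0, τ < ρ ∧ (ρ + τ) ^ d ≤ 2 * ρ ^ d ∧ ρ ^ d / 2 ≤ (ρ - τ) ^ d := by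
  have hρd := pow_pos hρ d
  have hadd : Tendsto (fun τ : ℝ => (ρ + τ) ^ d) (𝓝 0) (𝓝 (ρ ^ d)) :=
    (by fun_prop : Continuous fun τ : ℝ => (ρ + τ) ^ d).tendsto' 0 _ (by simp)
  have hsub : Tendsto (fun τ : ℝ => (ρ - τ) ^ d) (𝓝 0) (𝓝 (ρ ^ d)) :=
    (by fun_prop : Continuous fun τ : ℝ => (ρ - τ) ^ d).tendsto' 0 _ (by simp)
  have hsmall : ∀ᶠ τ in 𝓝 (0 : ℝ), τ < ρ ∧ (ρ + τ) ^ d ≤ 2 * ρ ^ d ∧ ρ ^ d / 2 ≤ (ρ - τ) ^ d := by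
    filter_upwards [eventually_lt_nhds hρ,
      hadd.eventually_le_const (by linarith : ρ ^ d < 2 * ρ ^ d),
      hsub.eventually_const_le (by linarith : ρ ^ d / 2 < ρ ^ d)] with τ h1 h2 h3
    exact ⟨h1, h2, h3⟩
  obtain ⟨τ, hτ, hτ0⟩ :=
    ((hsmall.filter_mono (nhdsWithin_le_nhds (s := Set.Ioi 0))).and self_mem_nhdsWithin).exists
  exact ⟨τ, hτ0, hτ⟩

theorem stmt_8_general (d : ℕ) (hd : 1 ≤ d) (R : ℝ)
    (Ω : Set (EuclideanSpace ℝ (Fin d)))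
    (hΩsub : Ω ⊆ Metric.closedBall 0 R)
    (μmin μmax : ℝ) (hμmin : 0 < μmin) (hμ : μmin ≤ μmax)
    (f : EuclideanSpace ℝ (Fin d) → ℝ) (hf0 : ∀ x ∉ Ω, f x = 0)
    (hfb : ∀ᵐ x ∂(volume : Measure (EuclideanSpace ℝ (Fin d))),
      x ∈ Ω → μmin ≤ f x ∧ f x ≤ μmax)
    (ν : Measure (EuclideanSpace ℝ (Fin d))) [IsProbabilityMeasure ν]
    (hν : ν = volume.withDensity fun x => ENNReal.ofReal (f x)) :
    ∀ ε > 0, ∀ δ ∈ Set.Ioo (0 : ℝ) 1, ∀ ρ > 0, ∃ N : ℕ, ∀ n > N,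
      (Measure.pi fun _ : Fin n => ν)
        {X : Fin n → EuclideanSpace ℝ (Fin d) |
          ∀ x₀ : EuclideanSpace ℝ (Fin d), Metric.ball x₀ ρ ⊆ Ω →
            (n : ℝ) * ((1 / 2) * μmin *
                (Real.pi ^ ((d : ℝ) / 2) / Real.Gamma ((d : ℝ) / 2 + 1)) * ρ ^ d - ε)
              < ((Finset.univ.filter fun i => X i ∈ Metric.ball x₀ ρ).card : ℝ) ∧
            ((Finset.univ.filter fun i => X i ∈ Metric.ball x₀ ρ).card : ℝ)
              < (n : ℝ) * (2 * μmax *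
                (Real.pi ^ ((d : ℝ) / 2) / Real.Gamma ((d : ℝ) / 2 + 1)) * ρ ^ d + ε)}
        ≥ ENNReal.ofReal (1 - δ) := by
  intro ε hε δ hδ ρ hρ
  have hμmax : 0 < μmax := hμmin.trans_le hμ
  have hf_le : ∀ᵐ x, f x ≤ μmax := by
    filter_upwards [hfb] with x hx
    by_cases hxΩ : x ∈ Ω
    exacts [(hx hxΩ).2, (hf0 x hxΩ).trans_le hμmax.le]
  obtain ⟨τ, hτ0, hτρ, hτadd, hτsub⟩ := exists_pos_lt_pow_add_le_two_mul_and_half_le_pow_sub hρ d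
  obtain ⟨T, -, hT⟩ := (isCompact_closedBall (0 : EuclideanSpace ℝ (Fin d)) R).elim_nhds_subcover
    (ball · τ) fun x _ => ball_mem_nhds x hτ0
  obtain ⟨N, hN⟩ := exists_ofReal_one_sub_le_measure_forall_abs_sampleCount_sub_lt ν
    (T ×ˢ {ρ - τ, ρ + τ}) (A := fun p => ball p.1 p.2) (fun _ _ => measurableSet_ball)
    (half_pos hε) hδ.1
  refine ⟨N, fun n hn => (hN n hn).trans (measure_mono fun X hX x₀ hx₀ => ?_)⟩
  obtain ⟨y, hyT, hxy⟩ := Set.mem_iUnion₂.mp (hT (hΩsub (hx₀ (mem_ball_self hρ))))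
  obtain ⟨hlow, hup⟩ := sampleCount_ball_mem_Ioo_of_dist_lt hd hν hμmin.le hμmax.le
    (hfb.mono fun x hx hxΩ => (hx hxΩ).1) hf_le X hτρ.le hxy hx₀
    (hX (y, ρ - τ) (mem_product.2 ⟨hyT, by simp⟩)) (hX (y, ρ + τ) (mem_product.2 ⟨hyT, by simp⟩))
  have hV := unitBallVolume_pos d
  show n * (1 / 2 * μmin * unitBallVolume d * ρ ^ d - ε) < sampleCount (ball x₀ ρ) X ∧
    (sampleCount (ball x₀ ρ) X : ℝ) < n * (2 * μmax * unitBallVolume d * ρ ^ d + ε)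
  constructor
  · nlinarith [mul_le_mul_of_nonneg_left hτsub (by positivity : 0 ≤ n * μmin * unitBallVolume d)]
  · nlinarith [mul_le_mul_of_nonneg_left hτadd (by positivity : 0 ≤ n * μmax * unitBallVolume d)]

/-- **Number of samples in a ball.**  If `ν` has a density `f` supported on
`Ω ⊆ closedBall 0 R` with `μ_min ≤ f ≤ μ_max` a.e. on `Ω`, then for every `ε, δ, ρ`
there is `N` such that for all `n > N`, with `ν^⊗n`-probability at least `1 − δ`,
simultaneously for every `x₀` with `ball x₀ ρ ⊆ Ω`, the number of samples in
`ball x₀ ρ` lies strictly between `n((1/2)μ_min V_d ρ^d − ε)` and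
`n(2 μ_max V_d ρ^d + ε)`, where `V_d = π^{d/2}/Γ(d/2+1)`. -/
theorem stmt_8 (d : ℕ) (hd : 1 ≤ d) (R : ℝ) (hR : 0 < R)
    (Ω : Set (EuclideanSpace ℝ (Fin d))) (hΩmeas : MeasurableSet Ω)
    (hΩsub : Ω ⊆ Metric.closedBall 0 R)
    (μmin μmax : ℝ) (hμmin : 0 < μmin) (hμ : μmin ≤ μmax)
    (f : EuclideanSpace ℝ (Fin d) → ℝ) (hf0 : ∀ x ∉ Ω, f x = 0)
    (hfb : ∀ᵐ x ∂(volume : Measure (EuclideanSpace ℝ (Fin d))),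
      x ∈ Ω → μmin ≤ f x ∧ f x ≤ μmax)
    (ν : Measure (EuclideanSpace ℝ (Fin d))) [IsProbabilityMeasure ν]
    (hν : ν = volume.withDensity fun x => ENNReal.ofReal (f x)) :
    ∀ ε > 0, ∀ δ ∈ Set.Ioo (0 : ℝ) 1, ∀ ρ > 0, ∃ N : ℕ, ∀ n > N,
      (Measure.pi fun _ : Fin n => ν)
        {X : Fin n → EuclideanSpace ℝ (Fin d) |
          ∀ x₀ : EuclideanSpace ℝ (Fin d), Metric.ball x₀ ρ ⊆ Ω →
            (n : ℝ) * ((1 / 2) * μmin *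
                (Real.pi ^ ((d : ℝ) / 2) / Real.Gamma ((d : ℝ) / 2 + 1)) * ρ ^ d - ε)
              < ((Finset.univ.filter fun i => X i ∈ Metric.ball x₀ ρ).card : ℝ) ∧
            ((Finset.univ.filter fun i => X i ∈ Metric.ball x₀ ρ).card : ℝ)
              < (n : ℝ) * (2 * μmax *
                (Real.pi ^ ((d : ℝ) / 2) / Real.Gamma ((d : ℝ) / 2 + 1)) * ρ ^ d + ε)}
        ≥ ENNReal.ofReal (1 - δ) :=
  stmt_8_general d hd R Ω hΩsub μmin μmax hμmin hμ f hf0 hfb ν hν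
end

section
/- Let m ≥ 1 be an integer, σ > 0, a ≥ 0, and let g : S^{m−1} → ℝ be a measurable function with σ ≤ g(θ) ≤ σ·(1 + a) for all θ ∈ S^{m−1}. Then ‖∫_{S^{m−1}} θ·g(θ)^{m+1} dσ(θ)‖ ≤ σ·((1 + a)^{m+1} − 1)·∫_{S^{m−1}} g(θ)^m dσ(θ). Moreover, if additionally (m+1)·a ≤ 1, then (m/(m+1))·‖∫_{S^{m−1}} θ·g(θ)^{m+1} dσ(θ)‖ / (∫_{S^{m−1}} g(θ)^m dσ(θ)) ≤ 2·(m+1)·a·σ. -/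
/-!
The surface measure is invariant under `θ ↦ -θ`, so `∫ θ dσ = 0` and the constant `s^{m+1}` may be
subtracted from `g^{m+1}` without changing the vector integral. Pointwise,
`0 ≤ g^{m+1} - s^{m+1} ≤ s^{m+1}((1+a)^{m+1} - 1) ≤ s((1+a)^{m+1} - 1) g^m`.
The second bound then follows from `(1+a)^n - 1 ≤ 2na` for `na ≤ 1`.
-/

open MeasureTheory Metric

theorem pow_succ_sub_pow_succ_le {s x a : ℝ} (n : ℕ) (hs : 0 ≤ s) (ha : 0 ≤ a) (hsx : s ≤ x)
    (hx : x ≤ s * (1 + a)) :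
    x ^ (n + 1) - s ^ (n + 1) ≤ s * ((1 + a) ^ (n + 1) - 1) * x ^ n := by
  have hc : 0 ≤ (1 + a) ^ (n + 1) - 1 := sub_nonneg.mpr (one_le_pow₀ (by linarith))
  calc x ^ (n + 1) - s ^ (n + 1) ≤ (s * (1 + a)) ^ (n + 1) - s ^ (n + 1) := by
        gcongr; linarith
    _ = s * ((1 + a) ^ (n + 1) - 1) * s ^ n := by rw [mul_pow]; ring
    _ ≤ s * ((1 + a) ^ (n + 1) - 1) * x ^ n := by gcongr

theorem one_add_pow_le_one_add_mul_add_sq {a : ℝ} (ha : 0 ≤ a) :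
    ∀ n : ℕ, n * a ≤ 1 → (1 + a) ^ n ≤ 1 + n * a + (n * a) ^ 2
  | 0, _ => by simp
  | n + 1, h => by
    push_cast at h ⊢
    have ih := one_add_pow_le_one_add_mul_add_sq ha n (by nlinarith)
    rw [pow_succ]
    nlinarith [mul_nonneg (Nat.cast_nonneg (α := ℝ) n) ha, pow_nonneg (by linarith : 0 ≤ 1 + a) n]

theorem one_add_pow_sub_one_le {a : ℝ} (ha : 0 ≤ a) {n : ℕ} (h : n * a ≤ 1) :
    (1 + a) ^ n - 1 ≤ 2 * n * a := by
  have := one_add_pow_le_one_add_mul_add_sq ha n h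
  nlinarith [mul_nonneg (Nat.cast_nonneg (α := ℝ) n) ha]

section Sphere

variable {E : Type*} [NormedAddCommGroup E] [NormedSpace ℝ E] [MeasurableSpace E] [BorelSpace E]

theorem MeasureTheory.Measure.map_neg_toSphere (μ : Measure E) [μ.IsNegInvariant] :
    μ.toSphere.map (fun θ => -θ) = μ.toSphere := by
  have hneg : Measurable (fun θ : sphere (0 : E) 1 => -θ) := continuous_neg.measurable
  ext S hS
  rw [Measure.map_apply hneg hS, Measure.toSphere_apply' _ (hneg hS),
    Measure.toSphere_apply' _ hS]
  have himage : Subtype.val '' ((fun θ : sphere (0 : E) 1 => -θ) ⁻¹' S) = -(Subtype.val '' S) := by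
    ext x
    constructor
    · rintro ⟨θ, hθ, rfl⟩
      exact ⟨-θ, hθ, by simp⟩
    · rintro ⟨θ, hθ, hθx⟩
      exact ⟨-θ, by simpa using hθ, by simp [hθx]⟩
  rw [himage, Set.smul_neg, Measure.measure_neg]

variable [FiniteDimensional ℝ E]

theorem MeasureTheory.Measure.integral_coe_toSphere (μ : Measure E) [μ.IsNegInvariant] :
    ∫ θ, (θ : E) ∂μ.toSphere = 0 := by
  have hneg : Measurable (fun θ : sphere (0 : E) 1 => -θ) := continuous_neg.measurable
  have hsymm : ∫ θ, (θ : E) ∂μ.toSphere = -∫ θ, (θ : E) ∂μ.toSphere := by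
    conv_lhs => rw [← μ.map_neg_toSphere]
    rw [integral_map hneg.aemeasurable continuous_subtype_val.aestronglyMeasurable]
    simp only [coe_neg_sphere, integral_neg]
  have htwo : (2 : ℝ) • ∫ θ, (θ : E) ∂μ.toSphere = 0 := by
    rw [two_smul]
    nth_rewrite 1 [hsymm]
    exact neg_add_cancel _
  exact (smul_eq_zero.mp htwo).resolve_left two_ne_zero

theorem norm_integral_smul_coe_le_integral_abs_sub {ν : Measure (sphere (0 : E) 1)}
    [IsFiniteMeasure ν] (hν : ∫ θ, (θ : E) ∂ν = 0) {f : sphere (0 : E) 1 → ℝ}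
    (hf : Integrable f ν) (c : ℝ) :
    ‖∫ θ, f θ • (θ : E) ∂ν‖ ≤ ∫ θ, |f θ - c| ∂ν := by
  have hnorm : ∀ (b : ℝ) (θ : sphere (0 : E) 1), ‖b • (θ : E)‖ = |b| := fun b θ => by
    rw [norm_smul, norm_eq_of_mem_sphere, mul_one, Real.norm_eq_abs]
  have hsmul : ∀ {h : sphere (0 : E) 1 → ℝ}, Integrable h ν →
      Integrable (fun θ => h θ • (θ : E)) ν := fun hh =>
    hh.norm.mono' (hh.1.smul continuous_subtype_val.aestronglyMeasurable)
      (ae_of_all _ fun θ => (hnorm _ θ).le)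
  have hfc : Integrable (fun θ => f θ - c) ν := hf.sub (integrable_const c)
  have hcenter : ∫ θ, (f θ - c) • (θ : E) ∂ν = ∫ θ, f θ • (θ : E) ∂ν := by
    simp_rw [sub_smul]
    rw [integral_sub (hsmul hf) (hsmul (integrable_const c)), integral_smul, hν, smul_zero,
      sub_zero]
  rw [← hcenter]
  exact norm_integral_le_of_norm_le hfc.abs (ae_of_all _ fun θ => (hnorm _ θ).le)

theorem norm_integral_pow_succ_smul_coe_toSphere_le (μ : Measure E) [μ.IsAddHaarMeasure]
    [μ.IsNegInvariant] {f : sphere (0 : E) 1 → ℝ} (hf : Measurable f) {s a : ℝ} (hs : 0 ≤ s)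
    (ha : 0 ≤ a) (hbound : ∀ θ, s ≤ f θ ∧ f θ ≤ s * (1 + a)) (n : ℕ) :
    ‖∫ θ, f θ ^ (n + 1) • (θ : E) ∂μ.toSphere‖ ≤
      s * ((1 + a) ^ (n + 1) - 1) * ∫ θ, f θ ^ n ∂μ.toSphere := by
  have hf_nonneg : ∀ θ, 0 ≤ f θ := fun θ => hs.trans (hbound θ).1
  have hint : ∀ k : ℕ, Integrable (fun θ => f θ ^ k) μ.toSphere := fun k =>
    .of_bound (hf.pow_const k).aestronglyMeasurable ((s * (1 + a)) ^ k) <| ae_of_all _ fun θ => by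
      rw [Real.norm_of_nonneg (pow_nonneg (hf_nonneg θ) k)]
      exact pow_le_pow_left₀ (hf_nonneg θ) (hbound θ).2 k
  calc ‖∫ θ, f θ ^ (n + 1) • (θ : E) ∂μ.toSphere‖
      ≤ ∫ θ, |f θ ^ (n + 1) - s ^ (n + 1)| ∂μ.toSphere :=
        norm_integral_smul_coe_le_integral_abs_sub μ.integral_coe_toSphere (hint _) _
    _ ≤ ∫ θ, s * ((1 + a) ^ (n + 1) - 1) * f θ ^ n ∂μ.toSphere := by
        refine integral_mono (((hint _).sub (integrable_const _)).abs) ((hint n).const_mul _)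
          fun θ => ?_
        rw [abs_of_nonneg (sub_nonneg.mpr (pow_le_pow_left₀ hs (hbound θ).1 _))]
        exact pow_succ_sub_pow_succ_le n hs ha (hbound θ).1 (hbound θ).2
    _ = s * ((1 + a) ^ (n + 1) - 1) * ∫ θ, f θ ^ n ∂μ.toSphere := integral_const_mul _ _

end Sphere

theorem stmt_12_general (m : ℕ) (s a : ℝ) (hs : 0 < s) (ha : 0 ≤ a)
    (g : EuclideanSpace ℝ (Fin m) → ℝ) (hg : Measurable g)
    (hbound : ∀ x : EuclideanSpace ℝ (Fin m), ‖x‖ = 1 → s ≤ g x ∧ g x ≤ s * (1 + a)) :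
    (‖∫ θ : Metric.sphere (0 : EuclideanSpace ℝ (Fin m)) 1,
        g (θ : EuclideanSpace ℝ (Fin m)) ^ (m + 1) • (θ : EuclideanSpace ℝ (Fin m))
          ∂((volume : Measure (EuclideanSpace ℝ (Fin m))).toSphere)‖ ≤
      s * ((1 + a) ^ (m + 1) - 1) *
        ∫ θ : Metric.sphere (0 : EuclideanSpace ℝ (Fin m)) 1,
          g (θ : EuclideanSpace ℝ (Fin m)) ^ m
            ∂((volume : Measure (EuclideanSpace ℝ (Fin m))).toSphere)) ∧
    (((m : ℝ) + 1) * a ≤ 1 →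
      ((m : ℝ) / ((m : ℝ) + 1)) *
          ‖∫ θ : Metric.sphere (0 : EuclideanSpace ℝ (Fin m)) 1,
            g (θ : EuclideanSpace ℝ (Fin m)) ^ (m + 1) • (θ : EuclideanSpace ℝ (Fin m))
              ∂((volume : Measure (EuclideanSpace ℝ (Fin m))).toSphere)‖ /
          (∫ θ : Metric.sphere (0 : EuclideanSpace ℝ (Fin m)) 1,
            g (θ : EuclideanSpace ℝ (Fin m)) ^ m
              ∂((volume : Measure (EuclideanSpace ℝ (Fin m))).toSphere)) ≤
        2 * ((m : ℝ) + 1) * a * s) := by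
  set ν := (volume : Measure (EuclideanSpace ℝ (Fin m))).toSphere
  have hbias := norm_integral_pow_succ_smul_coe_toSphere_le volume
    (f := fun θ : sphere (0 : EuclideanSpace ℝ (Fin m)) 1 => g θ)
    (hg.comp measurable_subtype_coe) hs.le ha (fun θ => hbound θ (norm_eq_of_mem_sphere θ)) m
  refine ⟨hbias, fun hma => ?_⟩
  have hden : 0 ≤ ∫ θ, g θ ^ m ∂ν :=
    integral_nonneg fun θ => pow_nonneg (hs.le.trans (hbound θ (norm_eq_of_mem_sphere θ)).1) m
  have hcoef : (1 + a) ^ (m + 1) - 1 ≤ 2 * ((m : ℝ) + 1) * a :=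
    mod_cast one_add_pow_sub_one_le ha (n := m + 1) (mod_cast hma)
  have hfrac : (m : ℝ) / ((m : ℝ) + 1) ≤ 1 := (div_le_one (by positivity)).mpr (by linarith)
  calc (m : ℝ) / ((m : ℝ) + 1) * ‖∫ θ, g θ ^ (m + 1) • (θ : EuclideanSpace ℝ (Fin m)) ∂ν‖ /
        ∫ θ, g θ ^ m ∂ν
      ≤ ‖∫ θ, g θ ^ (m + 1) • (θ : EuclideanSpace ℝ (Fin m)) ∂ν‖ / ∫ θ, g θ ^ m ∂ν := by
        gcongr
        exact mul_le_of_le_one_left (norm_nonneg _) hfrac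
    _ ≤ 2 * ((m : ℝ) + 1) * a * s := by
        refine div_le_of_le_mul₀ hden (by positivity) (hbias.trans ?_)
        linarith [mul_le_mul_of_nonneg_right (mul_le_mul_of_nonneg_left hcoef hs.le) hden]

/-- **Bias bound.**  If `s ≤ g(θ) ≤ s(1+a)` on the unit sphere, then
`‖∫_{S^{m−1}} θ·g(θ)^{m+1} dσ‖ ≤ s((1+a)^{m+1} − 1)·∫_{S^{m−1}} g^m dσ`, and if moreover
`(m+1)a ≤ 1` then `(m/(m+1))·‖∫ θ g^{m+1} dσ‖/(∫ g^m dσ) ≤ 2(m+1)·a·s`.  Here the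
sphere surface measure is realized as `volume.toSphere`. -/
theorem stmt_12 (m : ℕ) (hm : 1 ≤ m) (s a : ℝ) (hs : 0 < s) (ha : 0 ≤ a)
    (g : EuclideanSpace ℝ (Fin m) → ℝ) (hg : Measurable g)
    (hbound : ∀ x : EuclideanSpace ℝ (Fin m), ‖x‖ = 1 → s ≤ g x ∧ g x ≤ s * (1 + a)) :
    (‖∫ θ : Metric.sphere (0 : EuclideanSpace ℝ (Fin m)) 1,
        g (θ : EuclideanSpace ℝ (Fin m)) ^ (m + 1) • (θ : EuclideanSpace ℝ (Fin m))
          ∂((volume : Measure (EuclideanSpace ℝ (Fin m))).toSphere)‖ ≤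
      s * ((1 + a) ^ (m + 1) - 1) *
        ∫ θ : Metric.sphere (0 : EuclideanSpace ℝ (Fin m)) 1,
          g (θ : EuclideanSpace ℝ (Fin m)) ^ m
            ∂((volume : Measure (EuclideanSpace ℝ (Fin m))).toSphere)) ∧
    (((m : ℝ) + 1) * a ≤ 1 →
      ((m : ℝ) / ((m : ℝ) + 1)) *
          ‖∫ θ : Metric.sphere (0 : EuclideanSpace ℝ (Fin m)) 1,
            g (θ : EuclideanSpace ℝ (Fin m)) ^ (m + 1) • (θ : EuclideanSpace ℝ (Fin m))
              ∂((volume : Measure (EuclideanSpace ℝ (Fin m))).toSphere)‖ /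
          (∫ θ : Metric.sphere (0 : EuclideanSpace ℝ (Fin m)) 1,
            g (θ : EuclideanSpace ℝ (Fin m)) ^ m
              ∂((volume : Measure (EuclideanSpace ℝ (Fin m))).toSphere)) ≤
        2 * ((m : ℝ) + 1) * a * s) :=
  stmt_12_general m s a hs ha g hg hbound
end

section
/- Let σ and τ be real numbers with 0 < σ ≤ τ and √(σ/τ) + σ/τ ≤ √3/2. Then τ + σ − √(τ² − (√(σ·τ) + σ)²) ≤ 3σ. -/
/-! Put `s = √(στ)`. The hypothesis forces `σ/τ ≤ 9/25`, i.e. `s ≤ 3τ/5` and `5σ ≤ 9τ/5`, which is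
exactly what makes `(s + σ)² ≤ 4σ(τ - σ)`. Then `τ² - (s + σ)² ≥ (τ - 2σ)²`, so the square root is
at least `τ - 2σ`. -/

lemma le_nine_div_twentyfive_of_sqrt_add_le {x : ℝ} (h : √x + x ≤ √3 / 2) : x ≤ 9 / 25 := by
  by_contra! hx
  have hsqrt : 3 / 5 < √x := Real.lt_sqrt_of_sq_lt (by linarith)
  have hsqrt3 : √3 < 48 / 25 := (Real.sqrt_lt' (by norm_num)).2 (by norm_num)
  linarith

lemma sq_sqrt_mul_add_le {σ τ : ℝ} (hσ : 0 ≤ σ) (h : 25 * σ ≤ 9 * τ) :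
    (√(σ * τ) + σ) ^ 2 ≤ 4 * σ * (τ - σ) := by
  have hs : √(σ * τ) ≤ 3 * τ / 5 :=
    Real.sqrt_le_iff.2 ⟨by linarith, by nlinarith⟩
  have hs_sq : √(σ * τ) ^ 2 = σ * τ := Real.sq_sqrt (by nlinarith)
  nlinarith [mul_nonneg hσ (by linarith : 0 ≤ 3 * τ - 5 * σ - 2 * √(σ * τ))]

lemma sub_two_mul_le_sqrt_sq_sub_sq {σ τ r : ℝ} (h : r ^ 2 ≤ 4 * σ * (τ - σ)) :
    τ - 2 * σ ≤ √(τ ^ 2 - r ^ 2) :=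
  calc τ - 2 * σ ≤ |τ - 2 * σ| := le_abs_self _
    _ = √((τ - 2 * σ) ^ 2) := (Real.sqrt_sq_eq_abs _).symm
    _ ≤ √(τ ^ 2 - r ^ 2) := Real.sqrt_le_sqrt (by nlinarith)

/-- Deterministic core of the paper's bound: every sample in the region of interest lies
within distance `3σ` of the tangent space. -/
theorem stmt_13 (σ τ : ℝ) (hσ : 0 < σ) (hστ : σ ≤ τ)
    (h : Real.sqrt (σ / τ) + σ / τ ≤ Real.sqrt 3 / 2) :
    τ + σ - Real.sqrt (τ ^ 2 - (Real.sqrt (σ * τ) + σ) ^ 2) ≤ 3 * σ := by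
  have hτ : 0 < τ := hσ.trans_le hστ
  have hratio : 25 * σ ≤ 9 * τ := by
    have := le_nine_div_twentyfive_of_sqrt_add_le h
    rw [div_le_div_iff₀ hτ (by norm_num)] at this
    linarith
  have := sub_two_mul_le_sqrt_sq_sub_sq (sq_sqrt_mul_add_le hσ.le hratio)
  linarith
end

section
/- Let E be a real inner product space, q, q' ∈ E, τ > 0, and let w, v ∈ E be unit vectors. Suppose q' = q + t·v for some t ∈ ℝ, and suppose ‖q' − (q + τ·w)‖ ≥ τ and ‖q' − (q − τ·w)‖ ≥ τ. Then t = 0 or |t| ≥ 2·τ·|⟨v, w⟩|. -/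
/-!
Expanding `‖u ∓ τ • w‖² = ‖u‖² ∓ 2τ⟪u, w⟫ + τ²`, the two hypotheses `τ ≤ ‖u ∓ τ • w‖` say exactly
`2τ|⟪u, w⟫| ≤ ‖u‖²`. For `u = t • v` this reads `2τ|t||⟪v, w⟫| ≤ t²`; divide by `|t|` when `t ≠ 0`.
-/

open scoped RealInnerProductSpace

section TangentBalls

variable {E : Type*} [NormedAddCommGroup E] [InnerProductSpace ℝ E] {u w : E} {τ : ℝ}

theorem two_mul_inner_le_norm_sq_of_le_norm_sub (hw : ‖w‖ = 1) (hτ : 0 ≤ τ)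
    (h : τ ≤ ‖u - τ • w‖) : 2 * τ * ⟪u, w⟫ ≤ ‖u‖ ^ 2 := by
  have hsq : τ ^ 2 ≤ ‖u - τ • w‖ ^ 2 := pow_le_pow_left₀ hτ h 2
  rw [norm_sub_sq_real, real_inner_smul_right, norm_smul, Real.norm_of_nonneg hτ, hw] at hsq
  linarith

theorem two_mul_abs_inner_le_norm_sq (hw : ‖w‖ = 1) (hτ : 0 ≤ τ)
    (hsub : τ ≤ ‖u - τ • w‖) (hadd : τ ≤ ‖u + τ • w‖) : 2 * τ * |⟪u, w⟫| ≤ ‖u‖ ^ 2 := by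
  have hneg : 2 * τ * ⟪u, -w⟫ ≤ ‖u‖ ^ 2 :=
    two_mul_inner_le_norm_sq_of_le_norm_sub (by rwa [norm_neg]) hτ
      (by rwa [smul_neg, sub_neg_eq_add])
  rw [inner_neg_right] at hneg
  have hpos := two_mul_inner_le_norm_sq_of_le_norm_sub hw hτ hsub
  rcases abs_cases ⟪u, w⟫ with ⟨habs, -⟩ | ⟨habs, -⟩ <;> rw [habs] <;> linarith

end TangentBalls

/-- If `q' = q + t • v` lies outside the two open balls of radius `τ` tangent at `q` in
the directions `±w`, then `t = 0` or `|t| ≥ 2τ·|⟨v,w⟩|`. -/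
theorem stmt_14 (E : Type*) [NormedAddCommGroup E] [InnerProductSpace ℝ E]
    (q q' : E) (τ : ℝ) (hτ : 0 < τ) (w v : E) (hw : ‖w‖ = 1) (hv : ‖v‖ = 1)
    (t : ℝ) (hq' : q' = q + t • v)
    (h1 : τ ≤ ‖q' - (q + τ • w)‖) (h2 : τ ≤ ‖q' - (q - τ • w)‖) :
    t = 0 ∨ 2 * τ * |⟪v, w⟫| ≤ |t| := by
  rcases eq_or_ne t 0 with ht | ht
  · exact Or.inl ht
  right
  subst hq'
  have key : 2 * τ * |⟪t • v, w⟫| ≤ ‖t • v‖ ^ 2 :=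
    two_mul_abs_inner_le_norm_sq hw hτ.le
      (by rwa [add_sub_add_left_eq_sub] at h1) (by rwa [add_sub_sub_cancel] at h2)
  rw [real_inner_smul_left, abs_mul, norm_smul, hv, mul_one, Real.norm_eq_abs, sq] at key
  exact le_of_mul_le_mul_right (by linarith) (abs_pos.mpr ht)
end
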